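/- arXiv:2107.14602 — 3 statements merged into one kernel-verified Lean document; each statement's English description precedes it below -/
import Mathlib

section
/- Let A be an n×m matrix with entries in {0,...,p-1} and let Y be the transposition of columns s and t. If c(AY) < c(A) in the lexicographic order, then r(AY) < r(A) in the lexicographic order. -/
/-!
Reading a row or column as a base-`p` numeral, most significant digit first, is strictly
monotone for the lexicographic order on digit strings. For `s ≤ t`, swapping columns `s` and `t`
lowers `c` lexicographically iff column `t` is a smaller numeral than column `s`, i.e. iff at the
first row `i₀` where the two columns differ, `A i₀ t < A i₀ s`. Rows above `i₀` agree in
columns `s` and `t`, so the swap leaves them unchanged, while row `i₀` becomes lexicographically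
smaller, its first change being at position `s`.
-/

def rowCode (p n m : ℕ) (A : Fin n → Fin m → Fin p) : Fin n → ℕ :=
  fun i => ∑ j : Fin m, (A i j : ℕ) * p ^ (m - 1 - (j : ℕ))

def colCode (p n m : ℕ) (A : Fin n → Fin m → Fin p) : Fin m → ℕ :=
  fun j => ∑ i : Fin n, (A i j : ℕ) * p ^ (n - 1 - (i : ℕ))

def MatEquiv (p n m : ℕ) (A B : Fin n → Fin m → Fin p) : Prop :=
  ∃ (σ : Equiv.Perm (Fin n)) (τ : Equiv.Perm (Fin m)), ∀ i j, A i j = B (σ i) (τ j)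

def Canonical (p n m : ℕ) (A : Fin n → Fin m → Fin p) : Prop :=
  ∀ B : Fin n → Fin m → Fin p, MatEquiv p n m B A →
    toLex (rowCode p n m A) ≤ toLex (rowCode p n m B)

def SemiCanonical (p n m : ℕ) (A : Fin n → Fin m → Fin p) : Prop :=
  Monotone (rowCode p n m A) ∧ Monotone (colCode p n m A)

def ofDigitsBE (p : ℕ) {N : ℕ} (d : Fin N → Fin p) : ℕ :=
  ∑ i, (d i : ℕ) * p ^ (N - 1 - (i : ℕ))

lemma ofDigitsBE_eq_finFunctionFinEquiv {p N : ℕ} (d : Fin N → Fin p) :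
    ofDigitsBE p d = finFunctionFinEquiv (d ∘ Fin.rev) := by
  rw [finFunctionFinEquiv_apply, ofDigitsBE, ← Equiv.sum_comp Fin.revPerm]
  refine Finset.sum_congr rfl fun i _ => ?_
  simp only [Fin.revPerm_apply, Function.comp_apply, Fin.val_rev]
  congr 2
  omega

lemma ofDigitsBE_lt_pow {p N : ℕ} (d : Fin N → Fin p) : ofDigitsBE p d < p ^ N := by
  rw [ofDigitsBE_eq_finFunctionFinEquiv]
  exact Fin.isLt _

lemma ofDigitsBE_cons {p N : ℕ} (x : Fin p) (d : Fin N → Fin p) :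
    ofDigitsBE p (Fin.cons x d : Fin (N + 1) → Fin p) = x * p ^ N + ofDigitsBE p d := by
  simp only [ofDigitsBE, Fin.sum_univ_succ, Fin.cons_zero, Fin.cons_succ, Fin.val_zero,
    Fin.val_succ]
  congr 1
  refine Finset.sum_congr rfl fun i _ => ?_
  congr 2
  omega

lemma ofDigitsBE_lt_of_toLex_lt {p N : ℕ} {a b : Fin N → Fin p} (h : toLex a < toLex b) :
    ofDigitsBE p a < ofDigitsBE p b := by
  induction N with
  | zero => exact absurd h (Subsingleton.elim a b ▸ lt_irrefl _)
  | succ N ih =>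
    rw [← Fin.cons_self_tail a, ← Fin.cons_self_tail b] at h ⊢
    rcases (Fin.pi_lex_lt_cons_cons _).1 h with h0 | ⟨h0, htail⟩
    · calc ofDigitsBE p (Fin.cons (a 0) (Fin.tail a) : Fin (N + 1) → Fin p)
            < (a 0 + 1 : ℕ) * p ^ N := by
              rw [ofDigitsBE_cons, add_one_mul]
              exact Nat.add_lt_add_left (ofDigitsBE_lt_pow _) _
          _ ≤ b 0 * p ^ N := Nat.mul_le_mul_right _ h0
          _ ≤ _ := by rw [ofDigitsBE_cons]; exact Nat.le_add_right _ _
    · rw [ofDigitsBE_cons, ofDigitsBE_cons, h0]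
      exact Nat.add_lt_add_left (ih htail) _

lemma strictMono_ofDigitsBE (p N : ℕ) :
    StrictMono fun d : Lex (Fin N → Fin p) => ofDigitsBE p (ofLex d) :=
  fun _ _ => ofDigitsBE_lt_of_toLex_lt

lemma Function.comp_swap_eq_self {α β : Type*} [DecidableEq α] {f : α → β} {i j : α}
    (h : f i = f j) : f ∘ Equiv.swap i j = f := by
  rw [Equiv.comp_swap_eq_update, h, Function.update_eq_self, ← h, Function.update_eq_self]

lemma Pi.toLex_comp_swap_lt_iff {ι α : Type*} [LinearOrder ι] [LinearOrder α] {f : ι → α}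
    {i j : ι} (hij : i ≤ j) : toLex (f ∘ Equiv.swap i j) < toLex f ↔ f j < f i := by
  refine ⟨fun h => lt_of_le_of_ne ?_ fun hji => h.ne ?_, Pi.lex_desc hij⟩
  · simpa using Pi.apply_le_of_toLex h.le fun k hk =>
      congr_arg f (Equiv.swap_apply_of_ne_of_ne hk.ne (hk.trans_le hij).ne)
  · rw [Function.comp_swap_eq_self hji.symm]

theorem stmt4_general (p n m : ℕ) (A : Fin n → Fin m → Fin p)
    (s t : Fin m)
    (AY : Fin n → Fin m → Fin p) (hAY : AY = fun i j => A i (Equiv.swap s t j))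
    (h : toLex (colCode p n m AY) < toLex (colCode p n m A)) :
    toLex (rowCode p n m AY) < toLex (rowCode p n m A) := by
  subst hAY
  wlog hst : s ≤ t generalizing s t
  · rw [Equiv.swap_comm] at h ⊢
    exact this t s h (le_of_not_ge hst)
  have hcol : colCode p n m A t < colCode p n m A s :=
    (Pi.toLex_comp_swap_lt_iff (f := colCode p n m A) hst).1 h
  obtain ⟨i₀, hbefore, hi₀⟩ : toLex (fun i => A i t) < toLex (fun i => A i s) :=
    (strictMono_ofDigitsBE p n).lt_iff_lt.1 hcol
  refine ⟨i₀, fun i hi => ?_, ?_⟩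
  · show ofDigitsBE p (A i ∘ Equiv.swap s t) = ofDigitsBE p (A i)
    rw [Function.comp_swap_eq_self (hbefore i hi).symm]
  · exact strictMono_ofDigitsBE p m (Pi.lex_desc hst hi₀)

/-- if swapping columns `s` and `t` strictly decreases `c`
lexicographically, then it strictly decreases `r` lexicographically. -/
theorem stmt4 (p n m : ℕ) (hp : 2 ≤ p) (A : Fin n → Fin m → Fin p)
    (s t : Fin m) (hst : s ≠ t)
    (AY : Fin n → Fin m → Fin p) (hAY : AY = fun i j => A i (Equiv.swap s t j))
    (h : toLex (colCode p n m AY) < toLex (colCode p n m A)) :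
    toLex (rowCode p n m AY) < toLex (rowCode p n m A) :=
  stmt4_general p n m A s t AY hAY h
end

section
/- Let A be an n×m matrix with entries in {0,...,p-1}, and let X_1,...,X_s be row transpositions such that r(X_1 X_2 ⋯ X_s A) < r(X_2 ⋯ X_s A) < ⋯ < r(X_s A) < r(A) lexicographically. Then c(X_1 X_2 ⋯ X_s A) < c(A) lexicographically. -/
/-!
Lexicographic order on digit vectors in `Fin p` agrees with the numeric order of their base-`p`
values. So if swapping rows `u < v` lowers `r`, the first entry of `r` that changes is `x_u`, and
row `v` is lexicographically below row `u`. At the first column `j₀` where these rows differ, the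
swap puts the smaller digit in the heavier position `u`, which lowers `y_{j₀}`, while the columns
before `j₀` are unchanged. Hence every step of the chain lowers `c`.
-/

open Equiv

def digitValue (p : ℕ) {m : ℕ} (f : Fin m → Fin p) : ℕ :=
  ∑ j, (f j : ℕ) * p ^ (m - 1 - (j : ℕ))

theorem Fin.toLex_cons_lt_cons_iff {α : Type*} [LT α] {n : ℕ} {a b : α} {x y : Fin n → α} :
    toLex (Fin.cons a x : Fin (n + 1) → α) < toLex (Fin.cons b y) ↔
      a < b ∨ a = b ∧ toLex x < toLex y := by
  constructor
  · rintro ⟨i, hagree, hlt⟩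
    induction i using Fin.cases with
    | zero => exact Or.inl hlt
    | succ i =>
      refine Or.inr ⟨hagree 0 (Fin.succ_pos i), i, fun j hj => ?_, hlt⟩
      simpa using hagree j.succ (Fin.succ_lt_succ_iff.2 hj)
  · rintro (hab | ⟨rfl, i, hagree, hlt⟩)
    · exact ⟨0, fun j hj => absurd hj (Fin.not_lt_zero j), hab⟩
    · refine ⟨i.succ, fun j hj => ?_, hlt⟩
      induction j using Fin.cases with
      | zero => rfl
      | succ j => exact hagree j (Fin.succ_lt_succ_iff.1 hj)

theorem Pi.toLex_comp_swap_lt_iff_s5 {ι α : Type*} [LinearOrder ι] [Preorder α] [DecidableEq ι]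
    {x : ι → α} {u v : ι} (huv : u < v) :
    toLex (x ∘ swap u v) < toLex x ↔ x v < x u := by
  constructor
  · rintro ⟨i, hagree, hlt⟩
    change ∀ j < i, x (swap u v j) = x j at hagree
    change x (swap u v i) < x i at hlt
    rcases eq_or_ne i u with rfl | hiu
    · simpa using hlt
    rcases eq_or_ne i v with rfl | hiv
    · have := hagree u huv
      simp only [swap_apply_left, swap_apply_right] at this hlt
      exact absurd hlt (this ▸ lt_irrefl _)
    · rw [swap_apply_of_ne_of_ne hiu hiv] at hlt
      exact absurd hlt (lt_irrefl _)
  · intro h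
    refine ⟨u, fun j hj => ?_, by simpa using h⟩
    simp [swap_apply_of_ne_of_ne hj.ne (hj.trans huv).ne]

namespace digitValue

variable {p m : ℕ}

theorem cons (a : Fin p) (f : Fin m → Fin p) :
    digitValue p (Fin.cons a f : Fin (m + 1) → Fin p) = a * p ^ m + digitValue p f := by
  simp [digitValue, Fin.sum_univ_succ, Nat.sub_sub, Nat.add_comm]

theorem lt_pow (f : Fin m → Fin p) : digitValue p f < p ^ m := by
  induction m with
  | zero => simp [digitValue]
  | succ m ih =>
    rw [← Fin.cons_self_tail f, cons, pow_succ']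
    calc (f 0 : ℕ) * p ^ m + digitValue p (Fin.tail f) < (f 0 + 1) * p ^ m := by
          linarith [ih (Fin.tail f)]
      _ ≤ p * p ^ m := Nat.mul_le_mul_right _ (f 0).isLt

theorem lt_of_toLex_lt {f g : Fin m → Fin p} (h : toLex f < toLex g) :
    digitValue p f < digitValue p g := by
  induction m with
  | zero => exact absurd h (Subsingleton.elim f g ▸ lt_irrefl _)
  | succ m ih =>
    rw [← Fin.cons_self_tail f, ← Fin.cons_self_tail g] at h ⊢
    rw [cons, cons]
    rcases Fin.toLex_cons_lt_cons_iff.1 h with h0 | ⟨h0, htail⟩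
    · calc (f 0 : ℕ) * p ^ m + digitValue p (Fin.tail f)
          < (f 0 + 1) * p ^ m := by linarith [lt_pow (Fin.tail f)]
        _ ≤ g 0 * p ^ m := Nat.mul_le_mul_right _ h0
        _ ≤ _ := Nat.le_add_right _ _
    · rw [h0]
      exact Nat.add_lt_add_left (ih htail) _

theorem lt_iff {f g : Fin m → Fin p} : digitValue p f < digitValue p g ↔ toLex f < toLex g :=
  (show StrictMono fun f : Lex (Fin m → Fin p) => digitValue p (ofLex f) from
    fun _ _ => lt_of_toLex_lt).lt_iff_lt

end digitValue

theorem colCode_swapRows_lt {p n m : ℕ} (A : Fin n → Fin m → Fin p) {u v : Fin n} (huv : u ≠ v)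
    (h : toLex (rowCode p n m fun i => A (swap u v i)) < toLex (rowCode p n m A)) :
    toLex (colCode p n m fun i => A (swap u v i)) < toLex (colCode p n m A) := by
  wlog huv' : u < v generalizing u v
  · rw [swap_comm] at h ⊢
    exact this huv.symm h (huv.symm.lt_of_le (not_lt.1 huv'))
  obtain ⟨j₀, hagree, hlt⟩ : toLex (A v) < toLex (A u) :=
    digitValue.lt_iff.1 ((Pi.toLex_comp_swap_lt_iff_s5 (x := rowCode p n m A) huv').1 h)
  refine ⟨j₀, fun j hj => ?_, ?_⟩
  · change digitValue p (fun i => A (swap u v i) j) = digitValue p fun i => A i j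
    simp only [apply_swap_eq_self (v := fun i => A i j) (hagree j hj).symm]
  · exact digitValue.lt_iff.2 ((Pi.toLex_comp_swap_lt_iff_s5 (x := fun i => A i j₀) huv').2 hlt)

theorem stmt5_general (p n m s : ℕ) (hs : 1 ≤ s)
    (A : Fin n → Fin m → Fin p)
    (B : Fin (s + 1) → Fin n → Fin m → Fin p)
    (hB0 : B 0 = A)
    (hstep : ∀ k : Fin s, ∃ u v : Fin n, u ≠ v ∧
      B k.succ = fun i j => B k.castSucc (Equiv.swap u v i) j)
    (hlt : ∀ k : Fin s,
      toLex (rowCode p n m (B k.succ)) < toLex (rowCode p n m (B k.castSucc))) :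
    toLex (colCode p n m (B (Fin.last s))) < toLex (colCode p n m A) := by
  have hanti : StrictAnti fun k => toLex (colCode p n m (B k)) := by
    refine Fin.strictAnti_iff_succ_lt.2 fun k => ?_
    obtain ⟨u, v, huv, hk⟩ := hstep k
    have hk_lt := hlt k
    rw [hk] at hk_lt ⊢
    exact colCode_swapRows_lt _ huv hk_lt
  rw [← hB0]
  exact hanti (Fin.lt_def.2 hs)

/-- if a chain of row transpositions strictly decreases `r` at each
step, then `c` of the final matrix is lexicographically smaller than `c(A)`. -/
theorem stmt5 (p n m s : ℕ) (hp : 2 ≤ p) (hs : 1 ≤ s)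
    (A : Fin n → Fin m → Fin p)
    (B : Fin (s + 1) → Fin n → Fin m → Fin p)
    (hB0 : B 0 = A)
    (hstep : ∀ k : Fin s, ∃ u v : Fin n, u ≠ v ∧
      B k.succ = fun i j => B k.castSucc (Equiv.swap u v i) j)
    (hlt : ∀ k : Fin s,
      toLex (rowCode p n m (B k.succ)) < toLex (rowCode p n m (B k.castSucc))) :
    toLex (colCode p n m (B (Fin.last s))) < toLex (colCode p n m A) :=
  stmt5_general p n m s hs A B hB0 hstep hlt
end

section
/- If A is a canonical n×m matrix with entries in {0,...,p-1}, then for every row i, the number of nonzero entries in the first row is at most the number of nonzero entries in the i-th row: ν_1(A) ≤ ν_i(A). -/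
/-! Row codes are base-`p` numbers whose digits are the entries of the row, the entry in column `j`
having weight `p ^ (m - 1 - j)`. Swapping the first row with row `i` and moving the `c` nonzero
entries of row `i` into the last `c` columns yields an equivalent matrix whose first row code is
`< p ^ c`. By canonicity the first row code of `A` is `< p ^ c` as well, and a base-`p` number
below `p ^ c` has at most `c` nonzero digits. -/

open Finset

section DigitSums

variable {ι : Type*} {p c : ℕ} {s : Finset ι} {e d : ι → ℕ}

theorem card_filter_ne_zero_le_of_sum_mul_pow_lt (hp : 2 ≤ p) (he : Set.InjOn e s)
    (h : ∑ i ∈ s, d i * p ^ e i < p ^ c) : #{i ∈ s | d i ≠ 0} ≤ c := by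
  have hmaps : Set.MapsTo e ({i ∈ s | d i ≠ 0} : Finset ι) (range c) := by
    intro i hi
    obtain ⟨his, hdi⟩ := mem_filter.mp hi
    have hpow : p ^ e i < p ^ c :=
      calc p ^ e i ≤ d i * p ^ e i := Nat.le_mul_of_pos_left _ (Nat.pos_of_ne_zero hdi)
        _ ≤ ∑ i ∈ s, d i * p ^ e i :=
          single_le_sum (f := fun i => d i * p ^ e i) (fun _ _ => Nat.zero_le _) his
        _ < p ^ c := h
    simpa using (Nat.pow_lt_pow_iff_right (by omega)).mp hpow
  simpa using card_le_card_of_injOn e hmaps (he.mono (filter_subset _ _))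

theorem sum_mul_pow_lt_pow (hp : 0 < p) (he : Set.InjOn e s) (hd : ∀ i ∈ s, d i < p)
    (hc : ∀ i ∈ s, d i ≠ 0 → e i < c) : ∑ i ∈ s, d i * p ^ e i < p ^ c := by
  set s' := {i ∈ s | d i ≠ 0}
  have hs' : s'.image e ⊆ range c := by
    intro t ht
    obtain ⟨i, hi, rfl⟩ := mem_image.mp ht
    exact mem_range.mpr (hc i (mem_filter.mp hi).1 (mem_filter.mp hi).2)
  calc ∑ i ∈ s, d i * p ^ e i = ∑ i ∈ s', d i * p ^ e i :=
        (sum_filter_of_ne fun _ _ h => left_ne_zero_of_mul h).symm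
    _ ≤ ∑ i ∈ s', (p - 1) * p ^ e i := by
        gcongr with i hi
        have hdi := hd i (mem_filter.mp hi).1
        omega
    _ = (p - 1) * ∑ t ∈ s'.image e, p ^ t := by
        rw [sum_image (he.mono (filter_subset _ _)), mul_sum]
    _ ≤ (p - 1) * ∑ t ∈ range c, p ^ t := by
        gcongr
    _ = p ^ c - 1 := by rw [mul_comm, geom_sum_mul_of_one_le hp]
    _ < p ^ c := Nat.sub_one_lt (by positivity)

end DigitSums

theorem Finset.exists_perm_mapsTo_of_card_le {α : Type*} [Fintype α] [DecidableEq α]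
    {s t : Finset α} (h : #s ≤ #t) : ∃ τ : Equiv.Perm α, ∀ x ∈ s, τ x ∈ t := by
  obtain ⟨t', ht', hcard⟩ := exists_subset_card_eq h
  exact ⟨(equivOfCardEq hcard.symm).extendSubtype,
    fun x hx => ht' (Equiv.extendSubtype_mem _ x hx)⟩

theorem Fin.sub_one_sub_val_injective (m : ℕ) :
    Function.Injective fun j : Fin m => m - 1 - (j : ℕ) := by
  intro a b hab
  exact Fin.ext (by simp only at hab; omega)

section RowCode

variable {p n m : ℕ} (A : Fin n → Fin m → Fin p)

theorem card_filter_ne_zero_le_of_rowCode_lt (hp : 2 ≤ p) {i : Fin n} {c : ℕ}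
    (h : rowCode p n m A i < p ^ c) : #{j | (A i j : ℕ) ≠ 0} ≤ c :=
  card_filter_ne_zero_le_of_sum_mul_pow_lt hp (Fin.sub_one_sub_val_injective m).injOn h

theorem exists_perm_rowCode_lt (hp : 0 < p) (i : Fin n) :
    ∃ τ : Equiv.Perm (Fin m),
      rowCode p n m (fun i' j => A i' (τ j)) i < p ^ #{j | (A i j : ℕ) ≠ 0} := by
  set c := #{j | (A i j : ℕ) ≠ 0}
  -- the last `c` columns, which carry the weights `p ^ 0, …, p ^ (c - 1)`
  set t : Finset (Fin m) := (univ.filter fun k : Fin m => (k : ℕ) < c).image Fin.rev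
  have hct : c ≤ #t := by
    rw [card_image_of_injective _ Fin.rev_injective, Fin.card_filter_val_lt]
    exact le_min (card_le_univ _ |>.trans_eq (Fintype.card_fin m)) le_rfl
  obtain ⟨π, hπ⟩ := exists_perm_mapsTo_of_card_le hct
  refine ⟨π.symm, sum_mul_pow_lt_pow hp (Fin.sub_one_sub_val_injective m).injOn
    (fun j _ => (A i (π.symm j)).isLt) fun j _ hj => ?_⟩
  have hjt : j ∈ t := by simpa using hπ (π.symm j) (by simpa using hj)
  obtain ⟨k, hk, rfl⟩ := mem_image.mp hjt
  have hkc : (k : ℕ) < c := (mem_filter.mp hk).2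
  simp only [Fin.val_rev]
  omega

end RowCode

/-- in a canonical matrix, the first row has at most as many
nonzero entries as any other row. -/
theorem stmt15 (p n m : ℕ) (hp : 2 ≤ p) (hn : 0 < n)
    (A : Fin n → Fin m → Fin p) (hA : Canonical p n m A) (i : Fin n) :
    (Finset.univ.filter fun j : Fin m => (A ⟨0, hn⟩ j : ℕ) ≠ 0).card ≤
      (Finset.univ.filter fun j : Fin m => (A i j : ℕ) ≠ 0).card := by
  obtain ⟨τ, hτ⟩ := exists_perm_rowCode_lt A (by omega) i
  set σ := Equiv.swap ⟨0, hn⟩ i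
  refine card_filter_ne_zero_le_of_rowCode_lt A hp ?_
  calc rowCode p n m A ⟨0, hn⟩
      ≤ rowCode p n m (fun i' j => A (σ i') (τ j)) ⟨0, hn⟩ :=
        Pi.apply_le_of_toLex (hA _ ⟨σ, τ, fun _ _ => rfl⟩) fun _ hj => absurd hj (Nat.not_lt_zero _)
    _ = rowCode p n m (fun i' j => A i' (τ j)) (σ ⟨0, hn⟩) := rfl
    _ < _ := by rwa [Equiv.swap_apply_left]
end
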